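/- If f : Ω → ℂ is holomorphic on an open domain Ω ⊆ ℂ with |f(z)| < 1 and f'(z) ≠ 0 on Ω, then the positive function N defined by N² = (1/4)·|f'(z)|²/(1-|f(z)|²)² satisfies Liouville's equation ∂_z ∂_{z̄} log N = 4 N². -/

import Mathlib

/-- The Wirtinger derivative `∂_z = (∂_x - i ∂_y)/2`. -/
noncomputable def wirtingerDz (f : ℂ → ℂ) (z : ℂ) : ℂ :=
  ((fderiv ℝ f z) 1 - Complex.I * (fderiv ℝ f z) Complex.I) / 2

/-- The Wirtinger derivative `∂_{z̄} = (∂_x + i ∂_y)/2`. -/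
noncomputable def wirtingerDzbar (f : ℂ → ℂ) (z : ℂ) : ℂ :=
  ((fderiv ℝ f z) 1 + Complex.I * (fderiv ℝ f z) Complex.I) / 2

/-!
On `Ω` the logarithm of the density is `log N = ½ log (f' f̄') - log (1 - f f̄) - log 2`. Every
factor is a holomorphic function or the conjugate of one, so the Wirtinger derivatives follow from
the product and holomorphic chain rules, using `∂_{z̄} g = 0` and `∂_z ḡ = 0` for holomorphic `g`:
`∂_{z̄} log N = ½ conj (f''/f') + f f̄' / (1 - f f̄)`. Applying `∂_z` kills the antiholomorphic
first term and leaves `f' f̄' / (1 - f f̄)² = 4 N²`.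
-/

open Complex ComplexConjugate Topology

/-- Every `ℝ`-linear map `ℂ → ℂ` is of this form, with `a = ∂_z` and `b = ∂_{z̄}`. -/
noncomputable def wirtingerCLM (a b : ℂ) : ℂ →L[ℝ] ℂ :=
  a • ContinuousLinearMap.id ℝ ℂ + b • conjCLE.toContinuousLinearMap

@[simp]
lemma wirtingerCLM_apply (a b h : ℂ) : wirtingerCLM a b h = a * h + b * conj h := rfl

def HasWirtingerDerivAt (g : ℂ → ℂ) (a b z : ℂ) : Prop :=
  HasFDerivAt g (wirtingerCLM a b) z

lemma HasDerivAt.hasWirtingerDerivAt {g : ℂ → ℂ} {a z : ℂ} (hg : HasDerivAt g a z) :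
    HasWirtingerDerivAt g a 0 z := by
  refine (hg.hasFDerivAt.restrictScalars ℝ).congr_fderiv ?_
  ext1 h; simp [wirtingerCLM]; ring

lemma HasDerivAt.comp_hasWirtingerDerivAt {φ g : ℂ → ℂ} {φ' a b z : ℂ}
    (hφ : HasDerivAt φ φ' (g z)) (hg : HasWirtingerDerivAt g a b z) :
    HasWirtingerDerivAt (fun w => φ (g w)) (φ' * a) (φ' * b) z := by
  refine ((hφ.hasFDerivAt.restrictScalars ℝ).comp z hg).congr_fderiv ?_
  ext1 h; simp [wirtingerCLM]; ring

namespace HasWirtingerDerivAt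

variable {g h : ℂ → ℂ} {a b c d z : ℂ}

lemma wirtingerDz_eq (hg : HasWirtingerDerivAt g a b z) : wirtingerDz g z = a := by
  rw [wirtingerDz, hg.fderiv]
  simp only [wirtingerCLM_apply, map_one, conj_I]
  linear_combination (b - a) / 2 * I_sq

lemma wirtingerDzbar_eq (hg : HasWirtingerDerivAt g a b z) : wirtingerDzbar g z = b := by
  rw [wirtingerDzbar, hg.fderiv]
  simp only [wirtingerCLM_apply, map_one, conj_I]
  linear_combination (a - b) / 2 * I_sq

lemma congr_of_eventuallyEq (hg : HasWirtingerDerivAt g a b z) (hgh : h =ᶠ[𝓝 z] g) :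
    HasWirtingerDerivAt h a b z :=
  HasFDerivAt.congr_of_eventuallyEq hg hgh

lemma conj_comp (hg : HasWirtingerDerivAt g a b z) :
    HasWirtingerDerivAt (fun w => conj (g w)) (conj b) (conj a) z := by
  refine ((conjCLE.hasFDerivAt (x := g z)).comp z hg).congr_fderiv ?_
  ext1 h; simp [wirtingerCLM]; ring

lemma add (hg : HasWirtingerDerivAt g a b z) (hh : HasWirtingerDerivAt h c d z) :
    HasWirtingerDerivAt (fun w => g w + h w) (a + c) (b + d) z := by
  refine (HasFDerivAt.add hg hh).congr_fderiv ?_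
  ext1 h; simp [wirtingerCLM]; ring

lemma sub (hg : HasWirtingerDerivAt g a b z) (hh : HasWirtingerDerivAt h c d z) :
    HasWirtingerDerivAt (fun w => g w - h w) (a - c) (b - d) z := by
  refine (HasFDerivAt.sub hg hh).congr_fderiv ?_
  ext1 h; simp [wirtingerCLM]; ring

lemma const_sub (hg : HasWirtingerDerivAt g a b z) (c : ℂ) :
    HasWirtingerDerivAt (fun w => c - g w) (-a) (-b) z := by
  refine (HasFDerivAt.const_sub hg c).congr_fderiv ?_
  ext1 h; simp [wirtingerCLM]; ring

lemma sub_const (hg : HasWirtingerDerivAt g a b z) (c : ℂ) :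
    HasWirtingerDerivAt (fun w => g w - c) a b z :=
  HasFDerivAt.sub_const c hg

lemma mul (hg : HasWirtingerDerivAt g a b z) (hh : HasWirtingerDerivAt h c d z) :
    HasWirtingerDerivAt (fun w => g w * h w) (g z * c + h z * a) (g z * d + h z * b) z := by
  refine (HasFDerivAt.mul hg hh).congr_fderiv ?_
  ext1 h; simp [wirtingerCLM]; ring

lemma div_const (hg : HasWirtingerDerivAt g a b z) (c : ℂ) :
    HasWirtingerDerivAt (fun w => g w / c) (a / c) (b / c) z := by
  simpa [div_eq_inv_mul] using ((hasDerivAt_id (g z)).div_const c).comp_hasWirtingerDerivAt hg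

lemma inv (hg : HasWirtingerDerivAt g a b z) (hz : g z ≠ 0) :
    HasWirtingerDerivAt (fun w => (g w)⁻¹) (-a / g z ^ 2) (-b / g z ^ 2) z := by
  convert (hasDerivAt_inv hz).comp_hasWirtingerDerivAt hg using 1 <;> ring

lemma clog (hg : HasWirtingerDerivAt g a b z) (hz : g z ∈ slitPlane) :
    HasWirtingerDerivAt (fun w => log (g w)) (a / g z) (b / g z) z := by
  convert (hasDerivAt_log hz).comp_hasWirtingerDerivAt hg using 1 <;> ring

end HasWirtingerDerivAt

lemma DifferentiableAt.hasWirtingerDerivAt_conj {g : ℂ → ℂ} {z : ℂ}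
    (hg : DifferentiableAt ℂ g z) :
    HasWirtingerDerivAt (fun w => conj (g w)) 0 (conj (deriv g z)) z := by
  simpa using hg.hasDerivAt.hasWirtingerDerivAt.conj_comp

lemma Filter.EventuallyEq.wirtingerDz_eq {g h : ℂ → ℂ} {z : ℂ} (hgh : g =ᶠ[𝓝 z] h) :
    wirtingerDz g z = wirtingerDz h z := by
  simp only [wirtingerDz, hgh.fderiv_eq]

lemma mul_conj_mem_slitPlane {w : ℂ} (hw : w ≠ 0) : w * conj w ∈ slitPlane := by
  rw [mul_conj']
  exact_mod_cast ofReal_mem_slitPlane.2 (by positivity)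

lemma one_sub_mul_conj_mem_slitPlane {w : ℂ} (hw : ‖w‖ < 1) : 1 - w * conj w ∈ slitPlane := by
  have : (0 : ℝ) < 1 - ‖w‖ ^ 2 := by nlinarith [norm_nonneg w]
  rw [mul_conj']
  exact_mod_cast ofReal_mem_slitPlane.2 this

lemma Real.log_eq_of_sq_eq_div {n p q : ℝ} (hn : 0 < n) (hp : 0 < p) (hq : 0 < q)
    (h : n ^ 2 = 1 / 4 * p ^ 2 / q ^ 2) :
    Real.log n = Real.log (p ^ 2) / 2 - Real.log q - Real.log 2 := by
  have hn' : n = p / (2 * q) := by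
    rw [← sq_eq_sq₀ hn.le (by positivity), h]
    field_simp
    ring
  rw [hn', Real.log_div hp.ne' (by positivity), Real.log_mul two_ne_zero hq.ne', Real.log_pow]
  push_cast
  ring

/-- `log N`, written with complex logarithms of the positive reals `|f'|²` and `1 - |f|²` so that
the holomorphic chain rule applies. -/
noncomputable def logDensity (f : ℂ → ℂ) (w : ℂ) : ℂ :=
  log (deriv f w * conj (deriv f w)) / 2 - log (1 - f w * conj (f w)) - Real.log 2

noncomputable def logDensityDzbar (f : ℂ → ℂ) (w : ℂ) : ℂ :=
  conj (deriv (deriv f) w / deriv f w) / 2 + f w * conj (deriv f w) * (1 - f w * conj (f w))⁻¹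

section

variable {f : ℂ → ℂ} {z : ℂ}

lemma ofReal_log_eq_logDensity {n : ℝ} (hn : 0 < n) (hb : ‖f z‖ < 1) (hd : deriv f z ≠ 0)
    (h : n ^ 2 = 1 / 4 * ‖deriv f z‖ ^ 2 / (1 - ‖f z‖ ^ 2) ^ 2) :
    (Real.log n : ℂ) = logDensity f z := by
  have hq : (0 : ℝ) < 1 - ‖f z‖ ^ 2 := by nlinarith [norm_nonneg (f z)]
  rw [Real.log_eq_of_sq_eq_div hn (norm_pos_iff.2 hd) hq h, logDensity, mul_conj', mul_conj',
    ← ofReal_pow, ← ofReal_pow, ← ofReal_one, ← ofReal_sub, ← ofReal_log (by positivity),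
    ← ofReal_log hq.le]
  push_cast
  ring

lemma hasWirtingerDerivAt_logDensity (hf : AnalyticAt ℂ f z) (hb : ‖f z‖ < 1)
    (hd : deriv f z ≠ 0) :
    HasWirtingerDerivAt (logDensity f) (conj (logDensityDzbar f z)) (logDensityDzbar f z) z := by
  have hf' := hf.deriv.differentiableAt.hasDerivAt.hasWirtingerDerivAt
  have hf₀ := hf.differentiableAt.hasDerivAt.hasWirtingerDerivAt
  have hP := (hf'.mul hf'.conj_comp).clog (mul_conj_mem_slitPlane hd)
  have hQ := ((hf₀.mul hf₀.conj_comp).const_sub 1).clog (one_sub_mul_conj_mem_slitPlane hb)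
  have hQ₀ := slitPlane_ne_zero (one_sub_mul_conj_mem_slitPlane hb)
  have hQ₀' : 1 - conj (f z) * f z ≠ 0 := by rwa [mul_comm]
  have hd' : conj (deriv f z) ≠ 0 := (map_ne_zero _).2 hd
  have hE : HasWirtingerDerivAt (logDensity f) _ _ z :=
    ((hP.div_const 2).sub hQ).sub_const (Real.log 2 : ℂ)
  convert hE using 1 <;>
  · simp only [logDensityDzbar, map_add, map_mul, map_div₀, map_inv₀, map_sub, map_one, map_zero,
      map_ofNat, conj_conj]
    field_simp
    ring

lemma wirtingerDz_logDensityDzbar (hf : AnalyticAt ℂ f z) (hb : ‖f z‖ < 1)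
    (hd : deriv f z ≠ 0) :
    wirtingerDz (logDensityDzbar f) z
      = deriv f z * conj (deriv f z) / (1 - f z * conj (f z)) ^ 2 := by
  have hf' := hf.deriv.differentiableAt.hasDerivAt.hasWirtingerDerivAt
  have hf₀ := hf.differentiableAt.hasDerivAt.hasWirtingerDerivAt
  have hquot : HasWirtingerDerivAt (fun w => conj (deriv (deriv f) w / deriv f w)) 0 _ z :=
    (hf.deriv.deriv.div hf.deriv hd).differentiableAt.hasWirtingerDerivAt_conj
  have hQ := (hf₀.mul hf₀.conj_comp).const_sub 1
  have hQ₀ := slitPlane_ne_zero (one_sub_mul_conj_mem_slitPlane hb)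
  have hA : HasWirtingerDerivAt (logDensityDzbar f) _ _ z :=
    (hquot.div_const 2).add ((hf₀.mul hf'.conj_comp).mul (hQ.inv hQ₀))
  rw [hA.wirtingerDz_eq]
  simp only [map_zero]
  field_simp
  ring

end

theorem stmt6 (Ω : Set ℂ) (hΩ : IsOpen Ω) (f : ℂ → ℂ)
    (hf : DifferentiableOn ℂ f Ω)
    (hb : ∀ z ∈ Ω, ‖f z‖ < 1)
    (hd : ∀ z ∈ Ω, deriv f z ≠ 0)
    (N : ℂ → ℝ)
    (hN : ∀ z ∈ Ω, 0 < N z ∧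
      (N z) ^ 2 = (1 / 4) * ‖deriv f z‖ ^ 2 / (1 - ‖f z‖ ^ 2) ^ 2) :
    ∀ z ∈ Ω,
      wirtingerDz (fun w => wirtingerDzbar (fun u => (Real.log (N u) : ℂ)) w) z
        = 4 * ((N z : ℂ)) ^ 2 := by
  have hfa : AnalyticOnNhd ℂ f Ω := hf.analyticOnNhd hΩ
  have hlog : ∀ w ∈ Ω, (fun u => (Real.log (N u) : ℂ)) =ᶠ[𝓝 w] logDensity f :=
    fun w hw => Filter.eventually_of_mem (hΩ.mem_nhds hw) fun u hu =>
      ofReal_log_eq_logDensity (hN u hu).1 (hb u hu) (hd u hu) (hN u hu).2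
  intro z hz
  have hdzbar : (fun w => wirtingerDzbar (fun u => (Real.log (N u) : ℂ)) w)
      =ᶠ[𝓝 z] logDensityDzbar f := by
    filter_upwards [hΩ.mem_nhds hz] with w hw
    exact ((hasWirtingerDerivAt_logDensity (hfa w hw) (hb w hw) (hd w hw)).congr_of_eventuallyEq
      (hlog w hw)).wirtingerDzbar_eq
  have hN₂ := congrArg ((↑) : ℝ → ℂ) (hN z hz).2
  push_cast at hN₂
  rw [hdzbar.wirtingerDz_eq, wirtingerDz_logDensityDzbar (hfa z hz) (hb z hz) (hd z hz),
    mul_conj', mul_conj', hN₂]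
  ring
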